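/- arXiv:1007.3619 — 6 statements merged into one kernel-verified Lean document; each statement's English description precedes it below -/
import Mathlib

section
/- Let (τ_i) for 0 ≤ i ≤ n be a real sequence satisfying the recurrence √β_{i+1}·τ_{i+1} = (x − α_i)·τ_i − √β_i·τ_{i−1} for 0 ≤ i < n (with τ_{−1}=0), where β_i > 0. Set h = min_{0≤i≤n} √β_i, R = max_{0≤i≤n} √β_i, and C = max_{0≤i≤n} |x − α_i|. Then for all 0 ≤ i ≤ n, |τ_i| ≤ |τ_0|·(C/h)^i · Σ_{j=0}^{⌊i/2⌋} binom(i−j, j)·(R·h/C²)^j. -/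
/-!
Bounding the recurrence termwise gives `h |τ_{i+2}| ≤ C |τ_{i+1}| + R |τ_i|`, so `|τ_i|` is dominated
by the solution `w_i` of the majorant recurrence `h w_{i+2} = C w_{i+1} + R w_i` with `w_0 = |τ_0|`,
`h w_1 = C w_0`. Factoring out `(C/h)^i` leaves `F_{i+2} = F_{i+1} + q F_i` with `q = R h / C²` and
`F_0 = F_1 = 1`, whose solution is the Fibonacci polynomial `F_i(q) = ∑_j binom(i-j, j) q^j`.
-/

open Finset

lemma Nat.choose_sub_add_one_succ (i k : ℕ) :
    (i + 1 - k).choose (k + 1) = (i - k).choose k + (i - k).choose (k + 1) := by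
  rcases le_or_gt k i with hk | hk
  · rw [Nat.sub_add_comm hk, Nat.choose_succ_succ]
  · rw [Nat.sub_eq_zero_of_le hk, Nat.sub_eq_zero_of_le hk.le,
      Nat.choose_eq_zero_of_lt (Nat.zero_lt_of_lt hk), Nat.choose_eq_zero_of_lt k.succ_pos]

noncomputable def fibPoly (q : ℝ) (i : ℕ) : ℝ :=
  ∑ j ∈ range (i / 2 + 1), ((i - j).choose j : ℝ) * q ^ j

lemma fibPoly_eq_sum_range_of_le (q : ℝ) {i M : ℕ} (hM : i / 2 + 1 ≤ M) :
    fibPoly q i = ∑ j ∈ range M, ((i - j).choose j : ℝ) * q ^ j := by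
  refine sum_subset (range_subset_range.mpr hM) fun j _ hj => ?_
  rw [mem_range, not_lt] at hj
  rw [Nat.choose_eq_zero_of_lt (by omega), Nat.cast_zero, zero_mul]

@[simp] lemma fibPoly_zero (q : ℝ) : fibPoly q 0 = 1 := by simp [fibPoly]

@[simp] lemma fibPoly_one (q : ℝ) : fibPoly q 1 = 1 := by simp [fibPoly]

lemma fibPoly_add_two (q : ℝ) (i : ℕ) :
    fibPoly q (i + 2) = fibPoly q (i + 1) + q * fibPoly q i := by
  rw [fibPoly_eq_sum_range_of_le q (M := i + 3) (by omega),
    fibPoly_eq_sum_range_of_le q (M := i + 3) (by omega),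
    fibPoly_eq_sum_range_of_le q (M := i + 2) (by omega),
    sum_range_succ' _ (i + 2), sum_range_succ' _ (i + 2), mul_sum, add_right_comm,
    ← sum_add_distrib]
  congr 1
  refine sum_congr rfl fun k _ => ?_
  rw [show i + 2 - (k + 1) = i + 1 - k by omega, show i + 1 - (k + 1) = i - k by omega,
    Nat.choose_sub_add_one_succ, Nat.cast_add]
  ring

lemma fibPoly_scaled_add_two {h R C : ℝ} (hh : h ≠ 0) (hC : C ≠ 0) (i : ℕ) :
    h * ((C / h) ^ (i + 2) * fibPoly (R * h / C ^ 2) (i + 2))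
      = C * ((C / h) ^ (i + 1) * fibPoly (R * h / C ^ 2) (i + 1))
        + R * ((C / h) ^ i * fibPoly (R * h / C ^ 2) i) := by
  rw [fibPoly_add_two, pow_succ, pow_succ, pow_succ]
  generalize (C / h) ^ i = p
  field_simp

lemma le_mul_fibPoly_of_two_step_le {n : ℕ} {t : ℕ → ℝ} {h R C : ℝ}
    (hh : 0 < h) (hR : 0 ≤ R) (hC : 0 < C)
    (h₁ : 1 ≤ n → h * t 1 ≤ C * t 0)
    (h₂ : ∀ i, i + 2 ≤ n → h * t (i + 2) ≤ C * t (i + 1) + R * t i) :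
    ∀ i ≤ n, t i ≤ t 0 * (C / h) ^ i * fibPoly (R * h / C ^ 2) i := by
  intro i
  induction i using Nat.strong_induction_on with
  | _ i ih =>
    intro hi
    match i with
    | 0 => simp
    | 1 =>
      rw [fibPoly_one, mul_one, pow_one, mul_div, le_div_iff₀ hh]
      linarith [h₁ hi]
    | i + 2 =>
      refine le_of_mul_le_mul_left ?_ hh
      calc h * t (i + 2) ≤ C * t (i + 1) + R * t i := h₂ i hi
        _ ≤ C * (t 0 * (C / h) ^ (i + 1) * fibPoly (R * h / C ^ 2) (i + 1))
            + R * (t 0 * (C / h) ^ i * fibPoly (R * h / C ^ 2) i) := by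
          gcongr
          exacts [ih (i + 1) (by omega) (by omega), ih i (by omega) (by omega)]
        _ = h * (t 0 * (C / h) ^ (i + 2) * fibPoly (R * h / C ^ 2) (i + 2)) := by
          rw [mul_assoc (t 0), mul_assoc (t 0), mul_assoc (t 0), mul_left_comm h,
            fibPoly_scaled_add_two hh.ne' hC.ne']
          ring

lemma mul_abs_le_of_mul_eq_sub {s a b u v w h R C : ℝ} (hs : h ≤ s) (ha : |a| ≤ C)
    (hb : 0 ≤ b) (hbR : b ≤ R) (heq : s * u = a * v - b * w) :
    h * |u| ≤ C * |v| + R * |w| :=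
  calc h * |u| ≤ |s| * |u| := by gcongr; exact hs.trans (le_abs_self s)
    _ = |a * v - b * w| := by rw [← abs_mul, heq]
    _ ≤ |a * v| + |b * w| := abs_sub _ _
    _ = |a| * |v| + b * |w| := by rw [abs_mul, abs_mul, abs_of_nonneg hb]
    _ ≤ C * |v| + R * |w| := by gcongr

theorem tau_bound
    (n : ℕ) (α β : ℕ → ℝ) (x : ℝ) (τ : ℕ → ℝ)
    (hβ : ∀ i ≤ n, 0 < β i)
    (hrec : ∀ i < n, Real.sqrt (β (i + 1)) * τ (i + 1)
      = (x - α i) * τ i - Real.sqrt (β i) * (if i = 0 then 0 else τ (i - 1)))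
    (h R C : ℝ)
    (hh : h = (Finset.range (n + 1)).inf'
      (Finset.nonempty_range_iff.mpr (Nat.succ_ne_zero n)) (fun i => Real.sqrt (β i)))
    (hR : R = (Finset.range (n + 1)).sup'
      (Finset.nonempty_range_iff.mpr (Nat.succ_ne_zero n)) (fun i => Real.sqrt (β i)))
    (hC : C = (Finset.range (n + 1)).sup'
      (Finset.nonempty_range_iff.mpr (Nat.succ_ne_zero n)) (fun i => |x - α i|))
    (hCpos : 0 < C) :
    ∀ i ≤ n, |τ i| ≤ |τ 0| * (C / h) ^ i *
      ∑ j ∈ Finset.range (i / 2 + 1),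
        (Nat.choose (i - j) j : ℝ) * (R * h / C ^ 2) ^ j := by
  have mem : ∀ i ≤ n, i ∈ range (n + 1) := fun i hi => mem_range.mpr (Nat.lt_succ_of_le hi)
  have h_le : ∀ i ≤ n, h ≤ Real.sqrt (β i) := fun i hi => hh ▸ inf'_le (fun i => Real.sqrt (β i)) (mem i hi)
  have le_R : ∀ i ≤ n, Real.sqrt (β i) ≤ R := fun i hi => hR ▸ le_sup' (fun i => Real.sqrt (β i)) (mem i hi)
  have le_C : ∀ i ≤ n, |x - α i| ≤ C := fun i hi => hC ▸ le_sup' (fun i => |x - α i|) (mem i hi)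
  have h_pos : 0 < h := hh ▸ (lt_inf'_iff _).mpr fun i hi =>
    Real.sqrt_pos.mpr (hβ i (Nat.le_of_lt_succ (mem_range.mp hi)))
  have R_nonneg : 0 ≤ R := (Real.sqrt_nonneg _).trans (le_R 0 n.zero_le)
  have step : ∀ i < n, h * |τ (i + 1)| ≤ C * |τ i| + R * |if i = 0 then 0 else τ (i - 1)| :=
    fun i hi => mul_abs_le_of_mul_eq_sub (h_le (i + 1) hi) (le_C i hi.le)
      (Real.sqrt_nonneg _) (le_R i hi.le) (hrec i hi)
  exact le_mul_fibPoly_of_two_step_le h_pos R_nonneg hCpos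
    (fun hn => by simpa using step 0 hn) (fun i hi => by simpa using step (i + 1) hi)
end

section
/- Let L be a positive-definite linear functional on real polynomials (i.e. L[p²] > 0 for every nonzero polynomial p), and let (P_n) be the monic orthogonal polynomials with respect to L. If x_{n,k} is a zero of P_n and R_{n,k}(x) = P_n(x)/(x − x_{n,k}), then the numbers τ_{i,n,k} = L[P_i · R_{n,k}] satisfy the recurrence τ_{i+1,n,k} = (x_{n,k} − α_i)·τ_{i,n,k} − β_i·τ_{i−1,n,k} for 0 ≤ i < n, where α_i, β_i are the coefficients of the three-term recurrence P_{i+1}(x) = (x − α_i)P_i(x) − β_i P_{i−1}(x). -/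
/-!
Multiply the three-term recurrence by `R` and apply `L`. Since `X * R = P n + xnk * R`, the term
`L (X * P i * R)` equals `L (P i * P n) + xnk * τ i`, and `L (P i * P n) = 0` by orthogonality as `i < n`.
-/

open Polynomial

theorem LinearMap.map_X_mul_mul_of_eq_X_sub_C_mul {K : Type*} [CommRing K] (L : K[X] →ₗ[K] K)
    {q R : K[X]} {a : K} (hq : q = (X - C a) * R) (p : K[X]) :
    L (X * p * R) = L (p * q) + a * L (p * R) := by
  have hsplit : X * p * R = p * q + a • (p * R) := by
    rw [hq, smul_eq_C_mul]
    ring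
  rw [hsplit, map_add, map_smul, smul_eq_mul]

theorem tau_recurrence_general
    (L : Polynomial ℝ →ₗ[ℝ] ℝ)
    (P : ℕ → Polynomial ℝ)
    (horth : ∀ i j, i ≠ j → L (P i * P j) = 0)
    (α β : ℕ → ℝ)
    (hPrec : ∀ i, P (i + 1) = (X - Polynomial.C (α i)) * P i
      - Polynomial.C (β i) * (if i = 0 then 0 else P (i - 1)))
    (n : ℕ) (xnk : ℝ)
    (R : Polynomial ℝ) (hR : P n = (X - Polynomial.C xnk) * R)
    (τ : ℕ → ℝ) (hτ : ∀ i, τ i = L (P i * R)) :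
    ∀ i < n, τ (i + 1) = (xnk - α i) * τ i - β i * (if i = 0 then 0 else τ (i - 1)) := by
  intro i hi
  have hX : L (X * P i * R) = xnk * τ i := by
    rw [L.map_X_mul_mul_of_eq_X_sub_C_mul hR, horth i n hi.ne, hτ, zero_add]
  have hexpand : P (i + 1) * R = X * P i * R - α i • (P i * R)
      - β i • ((if i = 0 then 0 else P (i - 1)) * R) := by
    rw [hPrec, smul_eq_C_mul, smul_eq_C_mul]
    ring
  rw [hτ, hexpand, map_sub, map_sub, map_smul, map_smul, hX, ← hτ, smul_eq_mul, smul_eq_mul]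
  split_ifs
  · rw [zero_mul, map_zero]
    ring
  · rw [← hτ]
    ring

theorem tau_recurrence
    (L : Polynomial ℝ →ₗ[ℝ] ℝ)
    (hpos : ∀ p : Polynomial ℝ, p ≠ 0 → 0 < L (p ^ 2))
    (P : ℕ → Polynomial ℝ)
    (hmonic : ∀ k, (P k).Monic)
    (hdeg : ∀ k, (P k).natDegree = k)
    (horth : ∀ i j, i ≠ j → L (P i * P j) = 0)
    (α β : ℕ → ℝ) (hβ : ∀ i, 0 < β i)
    (hP0 : P 0 = 1)
    (hPrec : ∀ i, P (i + 1) = (X - Polynomial.C (α i)) * P i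
      - Polynomial.C (β i) * (if i = 0 then 0 else P (i - 1)))
    (n : ℕ) (xnk : ℝ) (hroot : (P n).eval xnk = 0)
    (R : Polynomial ℝ) (hR : P n = (X - Polynomial.C xnk) * R)
    (τ : ℕ → ℝ) (hτ : ∀ i, τ i = L (P i * R)) :
    ∀ i < n, τ (i + 1) = (xnk - α i) * τ i - β i * (if i = 0 then 0 else τ (i - 1)) :=
  tau_recurrence_general L P horth α β hPrec n xnk R hR τ hτ
end

section
/- Let (P_n) be monic orthogonal polynomials for a positive-definite linear functional L on ℝ[X], with distinct real zeros x_{n,1},…,x_{n,n} of P_n. Let Q_n(x) = ∏_{k=1}^s (x−γ_{n,k})·∏_{k=s+1}^n (x−x_{n,k}) with |γ_{n,k} − x_{n,k}| < ε for 1 ≤ k ≤ s ≤ n−1. Then L[P_n · Q_n] = L[P_n²] and for each 0 ≤ i ≤ n−1 there is a constant ω_i (independent of ε, given the configuration) such that |L[P_i · Q_n]| ≤ ε·ω_i. In particular, as ε → 0 we have L[P_i · Q_n] → 0 for 0 ≤ i ≤ n−1. -/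
open Polynomial Finset

/-!
Let `y` agree with the perturbed roots `γ` below `s` and with `x` elsewhere, so that the perturbed
polynomial is `∏ (X - C (y k)) = P n + D`. Both products are monic of degree `n`, so `deg D < n`,
and a telescoping induction shows that every coefficient of `D` is `O(ε)`. Since `P n` is
orthogonal to all polynomials of degree `< n`, `L (P n * Q) = L (P n ^ 2)`; for `i < n`,
`L (P i * Q) = L (P i * D)` is at most the coefficient bound of `D` times `∑ m < n, |L (P i * X ^ m)|`.
-/

namespace Polynomial

lemma linearMap_apply_eq_zero_of_degree_lt {R M : Type*} [Ring R] [Nontrivial R] [AddCommGroup M]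
    [Module R M]
    (f : R[X] →ₗ[R] M) {P : ℕ → R[X]} (hmonic : ∀ k, (P k).Monic)
    (hdeg : ∀ k, (P k).natDegree = k) {n : ℕ} (hf : ∀ k < n, f (P k) = 0) {q : R[X]}
    (hq : q.degree < n) : f q = 0 := by
  let S : Sequence R := ⟨P, fun k => by rw [degree_eq_natDegree (hmonic k).ne_zero, hdeg k]⟩
  have hspan : Submodule.span R (S '' Set.Iio n) ≤ LinearMap.ker f := by
    rw [Submodule.span_le]
    rintro _ ⟨k, hk, rfl⟩
    exact hf k hk
  rw [S.span_degreeLT fun k _ => by simp [S, (hmonic k).leadingCoeff]] at hspan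
  exact hspan (mem_degreeLT.mpr hq)

lemma abs_linearMap_apply_le_of_degree_lt (f : ℝ[X] →ₗ[ℝ] ℝ) {q : ℝ[X]} {n : ℕ} (hq : q.degree < n)
    {B : ℝ} (hB : ∀ m, |q.coeff m| ≤ B) : |f q| ≤ B * ∑ m ∈ range n, |f (X ^ m)| := by
  rcases eq_or_ne q 0 with rfl | hq0
  · simpa using mul_nonneg ((abs_nonneg _).trans (hB 0)) (sum_nonneg fun m _ => abs_nonneg _)
  rw [as_sum_range_C_mul_X_pow' q ((natDegree_lt_iff_degree_lt hq0).mpr hq), map_sum, mul_sum]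
  refine (abs_sum_le_sum_abs _ _).trans (sum_le_sum fun m _ => ?_)
  rw [← smul_eq_C_mul, map_smul, smul_eq_mul, abs_mul]
  gcongr
  exact hB m

lemma abs_coeff_mul_X_sub_C_le {p : ℝ[X]} {B : ℝ} (hp : ∀ m, |p.coeff m| ≤ B) (a : ℝ) (m : ℕ) :
    |(p * (X - C a)).coeff m| ≤ B * (1 + |a|) := by
  have hpX : |(p * X).coeff m| ≤ B := by
    cases m with
    | zero => simpa using (abs_nonneg _).trans (hp 0)
    | succ m => simpa [coeff_mul_X] using hp m
  rw [mul_sub, coeff_sub, coeff_mul_C]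
  calc |(p * X).coeff m - p.coeff m * a| ≤ |(p * X).coeff m| + |p.coeff m| * |a| :=
        (abs_sub _ _).trans_eq (by rw [abs_mul])
    _ ≤ B + B * |a| := by gcongr; exact hp m
    _ = B * (1 + |a|) := by ring

lemma abs_coeff_prod_X_sub_C_le (x : ℕ → ℝ) (n m : ℕ) :
    |(∏ k ∈ range n, (X - C (x k))).coeff m| ≤ ∏ k ∈ range n, (1 + |x k|) := by
  induction n generalizing m with
  | zero => rw [prod_range_zero, prod_range_zero, coeff_one]; split_ifs <;> simp
  | succ n ih =>
    rw [prod_range_succ, prod_range_succ]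
    exact abs_coeff_mul_X_sub_C_le ih (x n) m

lemma abs_coeff_prod_X_sub_C_sub_prod_le {x y : ℕ → ℝ} {ε : ℝ} {n : ℕ}
    (h : ∀ k < n, |y k - x k| ≤ ε) (m : ℕ) :
    |(∏ k ∈ range n, (X - C (y k)) - ∏ k ∈ range n, (X - C (x k))).coeff m|
      ≤ ε * n * ∏ k ∈ range n, (1 + ε + |x k|) := by
  induction n generalizing m with
  | zero => simp
  | succ n ih =>
    have hε : 0 ≤ ε := (abs_nonneg _).trans (h n n.lt_succ_self)
    have hyn : |y n| ≤ ε + |x n| := by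
      have := h n n.lt_succ_self; have := abs_sub_abs_le_abs_sub (y n) (x n); linarith
    set D := ∏ k ∈ range n, (X - C (y k)) - ∏ k ∈ range n, (X - C (x k))
    set Pn := ∏ k ∈ range n, (X - C (x k))
    have hstep : ∏ k ∈ range (n + 1), (X - C (y k)) - ∏ k ∈ range (n + 1), (X - C (x k))
        = D * (X - C (y n)) + Pn * C (x n - y n) := by
      simp only [prod_range_succ, D, Pn, C_sub]; ring
    have hD := abs_coeff_mul_X_sub_C_le (ih fun k hk => h k (by omega)) (y n) m
    have hP : |Pn.coeff m| ≤ ∏ k ∈ range n, (1 + ε + |x k|) :=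
      (abs_coeff_prod_X_sub_C_le x n m).trans (by gcongr; linarith)
    rw [hstep, coeff_add, coeff_mul_C]
    calc _ ≤ |(D * (X - C (y n))).coeff m| + |Pn.coeff m| * |x n - y n| :=
          (abs_add_le _ _).trans_eq (by rw [abs_mul])
      _ ≤ ε * n * (∏ k ∈ range n, (1 + ε + |x k|)) * (1 + ε + |x n|)
            + (∏ k ∈ range n, (1 + ε + |x k|)) * (1 + ε + |x n|) * ε := by
          have hprod : 0 ≤ ∏ k ∈ range n, (1 + ε + |x k|) := by positivity
          gcongr ?_ + ?_
          · exact hD.trans (mul_le_mul_of_nonneg_left (by linarith) (by positivity))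
          · rw [abs_sub_comm]
            exact mul_le_mul (hP.trans (le_mul_of_one_le_right hprod (by linarith [abs_nonneg (x n)])))
              (h n n.lt_succ_self) (abs_nonneg _) (by positivity)
      _ = ε * ↑(n + 1) * ∏ k ∈ range (n + 1), (1 + ε + |x k|) := by
          rw [prod_range_succ]; push_cast; ring

lemma degree_prod_X_sub_C_sub_prod_lt {R : Type*} [CommRing R] [Nontrivial R] (x y : ℕ → R)
    (n : ℕ) : (∏ k ∈ range n, (X - C (y k)) - ∏ k ∈ range n, (X - C (x k))).degree < (n : WithBot ℕ) := by
  have hdeg (z : ℕ → R) : (∏ k ∈ range n, (X - C (z k))).degree = (n : WithBot ℕ) := by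
    rw [degree_eq_natDegree (monic_prod_X_sub_C z _).ne_zero,
      natDegree_finsetProd_X_sub_C_eq_card, card_range]
  refine (hdeg y).symm ▸ degree_sub_lt_left ((hdeg y).trans (hdeg x).symm)
    (monic_prod_X_sub_C y _).ne_zero ?_
  rw [(monic_prod_X_sub_C y _).leadingCoeff, (monic_prod_X_sub_C x _).leadingCoeff]

end Polynomial

theorem almost_orthogonality_of_perturbed_polynomial_general
    (L : Polynomial ℝ →ₗ[ℝ] ℝ)
    (P : ℕ → Polynomial ℝ)
    (hmonic : ∀ k, (P k).Monic)
    (hdeg : ∀ k, (P k).natDegree = k)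
    (horth : ∀ i j, i ≠ j → L (P i * P j) = 0)
    (n s : ℕ) (hsn : s ≤ n - 1)
    (x : ℕ → ℝ)
    (hroots : P n = ∏ k ∈ Finset.range n, (X - Polynomial.C (x k))) :
    ∃ ε₀ > (0 : ℝ), ∃ ω : ℕ → ℝ,
      ∀ ε : ℝ, 0 < ε → ε < ε₀ → ∀ γ : ℕ → ℝ, (∀ k < s, |γ k - x k| < ε) →
        L (P n * ((∏ k ∈ Finset.range s, (X - Polynomial.C (γ k))) *
            ∏ k ∈ Finset.Ico s n, (X - Polynomial.C (x k)))) = L (P n ^ 2) ∧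
        ∀ i < n,
          |L (P i * ((∏ k ∈ Finset.range s, (X - Polynomial.C (γ k))) *
            ∏ k ∈ Finset.Ico s n, (X - Polynomial.C (x k))))| ≤ ε * ω i := by
  refine ⟨1, one_pos, fun i => n * (∏ k ∈ range n, (2 + |x k|)) * ∑ m ∈ range n, |L (P i * X ^ m)|,
    fun ε hε hε1 γ hγ => ?_⟩
  set y : ℕ → ℝ := fun k => if k < s then γ k else x k
  set D := ∏ k ∈ range n, (X - C (y k)) - P n with hD
  have hQ : (∏ k ∈ range s, (X - C (γ k))) * ∏ k ∈ Ico s n, (X - C (x k)) = P n + D := by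
    rw [add_sub_cancel, ← prod_range_mul_prod_Ico _ (by omega : s ≤ n)]
    congr 1
    · exact prod_congr rfl fun k hk => by simp [y, mem_range.mp hk]
    · exact prod_congr rfl fun k hk => by simp [y, (mem_Ico.mp hk).1.not_gt]
  have hDdeg : D.degree < n := by
    rw [hD, hroots]; exact degree_prod_X_sub_C_sub_prod_lt x y n
  have hDcoeff (m : ℕ) : |D.coeff m| ≤ ε * n * ∏ k ∈ range n, (2 + |x k|) := by
    have hyx : ∀ k < n, |y k - x k| ≤ ε := fun k _ => by
      by_cases hk : k < s
      · simpa [y, hk] using (hγ k hk).le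
      · simpa [y, hk] using hε.le
    rw [hD, hroots]
    refine (abs_coeff_prod_X_sub_C_sub_prod_le hyx m).trans ?_
    gcongr; linarith
  rw [hQ]
  constructor
  · rw [mul_add, map_add, sq, add_eq_left]
    exact linearMap_apply_eq_zero_of_degree_lt (L ∘ₗ LinearMap.mulLeft ℝ (P n)) hmonic hdeg
      (fun k hk => horth n k hk.ne') hDdeg
  · intro i hi
    rw [mul_add, map_add, horth i n hi.ne, zero_add]
    calc _ ≤ _ :=
          abs_linearMap_apply_le_of_degree_lt (L ∘ₗ LinearMap.mulLeft ℝ (P i)) hDdeg hDcoeff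
      _ = _ := by simp only [LinearMap.comp_apply, LinearMap.mulLeft_apply]; ring

theorem almost_orthogonality_of_perturbed_polynomial
    (L : Polynomial ℝ →ₗ[ℝ] ℝ)
    (hpos : ∀ p : Polynomial ℝ, p ≠ 0 → 0 < L (p ^ 2))
    (P : ℕ → Polynomial ℝ)
    (hmonic : ∀ k, (P k).Monic)
    (hdeg : ∀ k, (P k).natDegree = k)
    (horth : ∀ i j, i ≠ j → L (P i * P j) = 0)
    (n s : ℕ) (hs : 1 ≤ s) (hsn : s ≤ n - 1)
    (x : ℕ → ℝ) (hinj : ∀ k < n, ∀ l < n, x k = x l → k = l)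
    (hroots : P n = ∏ k ∈ Finset.range n, (X - Polynomial.C (x k))) :
    ∃ ε₀ > (0 : ℝ), ∃ ω : ℕ → ℝ,
      ∀ ε : ℝ, 0 < ε → ε < ε₀ → ∀ γ : ℕ → ℝ, (∀ k < s, |γ k - x k| < ε) →
        L (P n * ((∏ k ∈ Finset.range s, (X - Polynomial.C (γ k))) *
            ∏ k ∈ Finset.Ico s n, (X - Polynomial.C (x k)))) = L (P n ^ 2) ∧
        ∀ i < n,
          |L (P i * ((∏ k ∈ Finset.range s, (X - Polynomial.C (γ k))) *
            ∏ k ∈ Finset.Ico s n, (X - Polynomial.C (x k))))| ≤ ε * ω i :=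
  almost_orthogonality_of_perturbed_polynomial_general L P hmonic hdeg horth n s hsn x hroots
end

section
/- Let (P_n) be orthonormal polynomials with respect to a positive-definite linear functional L (deg P_n = n, L[P_m·P_n] = δ_{mn}), and let x_{n,1},…,x_{n,n} be the n distinct real zeros of P_n. Then the n×n matrix A with entries A_{i,j} = P_{n−i}(x_{n,j}) (1 ≤ i, j ≤ n) has all its leading principal minors nonsingular. -/
/-!
If `c` is a vector with `∑ᵢ cᵢ P_{n-1-i}(x_j) = 0` for `j < m`, put `q = ∑ᵢ cᵢ P_{n-1-i}` and
`g_k = ∏_{j > k} (X - x_j)` for `k < m`. Then `q g_k` vanishes at every zero of `P_n` and has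
degree `< 2n`, so it is `r P_n` with `deg r < n` and `L (q g_k) = 0` by orthogonality. Since
`g_k` is monic of degree `n-1-k`, the matrix `L (g_k P_{n-1-i})` is upper triangular with nonzero
diagonal, hence `c = 0`.
-/

open Polynomial Matrix

theorem Polynomial.dvd_of_forall_eval_eq_zero {K ι : Type*} [Field K] [Fintype ι] {p q : K[X]}
    (hp : p ≠ 0) (hdeg : p.natDegree ≤ Fintype.card ι) {x : ι → K} (hx : Function.Injective x)
    (hpx : ∀ j, p.eval (x j) = 0) (hqx : ∀ j, q.eval (x j) = 0) : p ∣ q := by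
  rw [← EuclideanDomain.mod_eq_zero]
  by_contra hr
  refine hr (eq_zero_of_natDegree_lt_card_of_eval_eq_zero _ hx (fun j => ?_) ?_)
  · rw [EuclideanDomain.mod_eq_sub_mul_div, eval_sub, eval_mul, hqx, hpx, zero_mul, sub_zero]
  · exact (natDegree_lt_natDegree hr (degree_mod_lt q hp)).trans_le hdeg

namespace Polynomial.Sequence

variable {K : Type*} [Field K] (S : Sequence K) (L : K[X] →ₗ[K] K)

theorem apply_mul_eq_zero_of_degree_lt (horth : ∀ i j, i ≠ j → L (S i * S j) = 0) {j : ℕ}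
    {p : K[X]} (hp : p.degree < j) : L (p * S j) = 0 := by
  have hspan : p ∈ Submodule.span K (S '' Set.Iio j) := by
    rw [S.span_degreeLT fun i _ => (leadingCoeff_ne_zero.mpr (S.ne_zero i)).isUnit]
    exact mem_degreeLT.mpr hp
  refine Submodule.span_le (p := LinearMap.ker (L ∘ₗ LinearMap.mulRight K (S j))) |>.mpr ?_ hspan
  rintro _ ⟨i, hi, rfl⟩
  exact horth i j (ne_of_lt hi)

theorem apply_mul_eq_coeff_div_leadingCoeff (horth : ∀ i j, i ≠ j → L (S i * S j) = 0)
    {j : ℕ} {p : K[X]} (hp : p.natDegree ≤ j) :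
    L (p * S j) = p.coeff j / (S j).leadingCoeff * L (S j * S j) := by
  set a := p.coeff j / (S j).leadingCoeff
  have hlow : (p - C a * S j).degree < j := by
    rw [degree_lt_iff_coeff_zero]
    intro k hk
    rcases hk.lt_or_eq with hjk | rfl
    · have hSj : (S j).natDegree < k := by simpa using hjk
      simp [coeff_eq_zero_of_natDegree_lt (hp.trans_lt hjk), coeff_eq_zero_of_natDegree_lt hSj]
    · have hlc : (S j).coeff j = (S j).leadingCoeff := by simp [leadingCoeff]
      simp [a, hlc, leadingCoeff_ne_zero.mpr (S.ne_zero j)]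
  calc L (p * S j) = L ((p - C a * S j) * S j + a • (S j * S j)) := by
        rw [smul_eq_C_mul]; ring_nf
    _ = a * L (S j * S j) := by
        rw [map_add, L.map_smul, S.apply_mul_eq_zero_of_degree_lt L horth hlow, zero_add,
          smul_eq_mul]

theorem apply_eq_zero_of_eval_eq_zero (horth : ∀ i j, i ≠ j → L (S i * S j) = 0) {n : ℕ}
    {x : Fin n → K} (hx : Function.Injective x) (hroot : ∀ j, (S n).eval (x j) = 0)
    {f : K[X]} (hf : f.natDegree < 2 * n) (hfx : ∀ j, f.eval (x j) = 0) : L f = 0 := by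
  obtain ⟨r, rfl⟩ := dvd_of_forall_eval_eq_zero (S.ne_zero n) (by simp) hx hroot hfx
  rw [mul_comm]
  refine S.apply_mul_eq_zero_of_degree_lt L horth ?_
  rcases eq_or_ne r 0 with rfl | hr
  · simp
  rw [natDegree_mul (S.ne_zero n) hr, S.natDegree_eq] at hf
  exact (natDegree_lt_iff_degree_lt hr).mp (by omega)

theorem det_apply_mul_ne_zero (horth : ∀ i j, i ≠ j → L (S i * S j) = 0)
    (hnorm : ∀ k, L (S k * S k) ≠ 0) {n m : ℕ} (hm : m ≤ n) {g : Fin m → K[X]}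
    (hg : ∀ k, (g k).Monic) (hg_deg : ∀ k, (g k).natDegree = n - 1 - k) :
    (of fun k i : Fin m => L (g k * S (n - 1 - i))).det ≠ 0 := by
  have hB : (of fun k i : Fin m => L (g k * S (n - 1 - i))).IsUpperTriangular := fun k i hik => by
    refine S.apply_mul_eq_zero_of_degree_lt L horth (degree_le_natDegree.trans_lt ?_)
    rw [hg_deg]
    exact_mod_cast (by simp only [id] at hik; omega)
  rw [det_of_isUpperTriangular hB]
  refine Finset.prod_ne_zero_iff.mpr fun k _ => ?_
  have hg_coeff : (g k).coeff (n - 1 - k) = 1 := by rw [← hg_deg]; exact (hg k).coeff_natDegree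
  rw [of_apply, S.apply_mul_eq_coeff_div_leadingCoeff L horth (hg_deg k).le, hg_coeff]
  exact mul_ne_zero (by simp [S.ne_zero]) (hnorm _)

theorem det_eval_at_zeros_ne_zero (horth : ∀ i j, i ≠ j → L (S i * S j) = 0)
    (hnorm : ∀ k, L (S k * S k) ≠ 0) {n : ℕ} {x : Fin n → K} (hx : Function.Injective x)
    (hroot : ∀ j, (S n).eval (x j) = 0) {m : ℕ} (hm : m ≤ n) :
    (of fun i j : Fin m => (S (n - 1 - i)).eval (x (Fin.castLE hm j))).det ≠ 0 := by
  rw [Ne, ← exists_vecMul_eq_zero_iff]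
  rintro ⟨c, hc0, hcM⟩
  set q := ∑ i : Fin m, C (c i) * S (n - 1 - i)
  have hq_deg : q.natDegree ≤ n - 1 :=
    natDegree_sum_le_of_forall_le _ _ fun i _ => (natDegree_C_mul_le _ _).trans (by simp)
  have hq_eval : ∀ j : Fin m, q.eval (x (Fin.castLE hm j)) = 0 := fun j => by
    simpa [q, eval_finsetSum, vecMul, dotProduct] using congrFun hcM j
  set g : Fin m → K[X] := fun k => ∏ j ∈ Finset.Ioi (Fin.castLE hm k), (X - C (x j))
  have hg_deg : ∀ k, (g k).natDegree = n - 1 - k := fun k => by simp [g]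
  have hgq : ∀ k, L (g k * q) = 0 := fun k => by
    refine S.apply_eq_zero_of_eval_eq_zero L horth hx hroot ?_ fun j => ?_
    · have := k.isLt
      exact (natDegree_mul_le.trans (add_le_add (hg_deg k).le hq_deg)).trans_lt (by omega)
    · rw [eval_mul]
      by_cases hj : Fin.castLE hm k < j
      · simp [g, eval_prod, Finset.prod_eq_zero (Finset.mem_Ioi.mpr hj)]
      · have hjm : (j : ℕ) < m := by simp [Fin.lt_def] at hj; omega
        exact mul_eq_zero_of_right _ (hq_eval ⟨j, hjm⟩)
  refine hc0 (eq_zero_of_mulVec_eq_zero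
    (S.det_apply_mul_ne_zero L horth hnorm hm (fun k => monic_prod_X_sub_C _ _) hg_deg) ?_)
  ext k
  rw [Pi.zero_apply, ← hgq k]
  simp only [mulVec, dotProduct, q, Finset.mul_sum, map_sum]
  refine Finset.sum_congr rfl fun i _ => ?_
  rw [of_apply, mul_left_comm, ← smul_eq_C_mul, L.map_smul, smul_eq_mul, mul_comm]

end Polynomial.Sequence

theorem leading_principal_minors_nonsingular_general
    (L : Polynomial ℝ →ₗ[ℝ] ℝ)
    (n : ℕ)
    (P : ℕ → Polynomial ℝ)
    (hdeg : ∀ k, (P k).natDegree = k)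
    (horth : ∀ i j, L (P i * P j) = if i = j then 1 else 0)
    (x : Fin n → ℝ)
    (hroot : ∀ j, (P n).eval (x j) = 0)
    (hinj : Function.Injective x)
    (A : Matrix (Fin n) (Fin n) ℝ)
    (hA : ∀ i j, A i j = (P (n - 1 - (i : ℕ))).eval (x j)) :
    ∀ m : ℕ, ∀ hm : m ≤ n,
      (Matrix.det (fun i j : Fin m => A (Fin.castLE hm i) (Fin.castLE hm j))) ≠ 0 := by
  have hP_ne : ∀ k, P k ≠ 0 := fun k hk => by simpa [hk] using horth k k
  let S : Sequence ℝ := ⟨P, fun k => by rw [degree_eq_natDegree (hP_ne k), hdeg]⟩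
  intro m hm
  have hminor : (fun i j : Fin m => A (Fin.castLE hm i) (Fin.castLE hm j))
      = of fun i j : Fin m => (S (n - 1 - i)).eval (x (Fin.castLE hm j)) := by
    ext i j
    simp [S, hA]
  rw [hminor]
  exact S.det_eval_at_zeros_ne_zero L (fun i j hij => by simpa [hij] using horth i j)
    (fun k => by simp [S, horth]) hinj hroot hm

theorem leading_principal_minors_nonsingular
    (L : Polynomial ℝ →ₗ[ℝ] ℝ)
    (hpos : ∀ p : Polynomial ℝ, p ≠ 0 → 0 < L (p ^ 2))
    (n : ℕ)
    (P : ℕ → Polynomial ℝ)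
    (hdeg : ∀ k, (P k).natDegree = k)
    (horth : ∀ i j, L (P i * P j) = if i = j then 1 else 0)
    (x : Fin n → ℝ)
    (hroot : ∀ j, (P n).eval (x j) = 0)
    (hinj : Function.Injective x)
    (A : Matrix (Fin n) (Fin n) ℝ)
    (hA : ∀ i j, A i j = (P (n - 1 - (i : ℕ))).eval (x j)) :
    ∀ m : ℕ, ∀ hm : m ≤ n,
      (Matrix.det (fun i j : Fin m => A (Fin.castLE hm i) (Fin.castLE hm j))) ≠ 0 :=
  leading_principal_minors_nonsingular_general L n P hdeg horth x hroot hinj A hA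
end

section
/- Let (T_i) be bounded operators on a Hilbert space, all but finitely many zero, satisfying ‖T_i* T_j‖ ≤ a(i,j)² and ‖T_i T_j*‖ ≤ a(i,j)² for a nonnegative symmetric function a with A := sup_i Σ_j a(i,j) < ∞. Then ‖Σ_i T_i‖ ≤ A. -/
open ContinuousLinearMap

namespace CotlarSteinAux

open Finset

/-- Sum over words of length `m` with letters in `s`. -/
def wsum {α X : Type*} [AddCommMonoid X] (s : Finset α) : ℕ → (List α → X) → X
  | 0, g => g []
  | m + 1, g => ∑ p ∈ s, wsum s m (fun L => g (p :: L))

lemma wsum_le_wsum {α : Type*} (s : Finset α) (m : ℕ) {g g' : List α → ℝ}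
    (h : ∀ L, g L ≤ g' L) : wsum s m g ≤ wsum s m g' := by
  induction m generalizing g g' with
  | zero => exact h []
  | succ m ih => exact Finset.sum_le_sum fun p _ => ih (fun L => h (p :: L))

lemma norm_wsum_le {α X : Type*} [SeminormedAddCommGroup X] (s : Finset α) (m : ℕ)
    (g : List α → X) : ‖wsum s m g‖ ≤ wsum s m (fun L => ‖g L‖) := by
  induction m generalizing g with
  | zero => exact le_rfl
  | succ m ih => exact (norm_sum_le _ _).trans (Finset.sum_le_sum fun p _ => ih _)

lemma mul_wsum {α X : Type*} [NonUnitalNonAssocSemiring X] (s : Finset α) (m : ℕ)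
    (c : X) (g : List α → X) : c * wsum s m g = wsum s m (fun L => c * g L) := by
  induction m generalizing g with
  | zero => rfl
  | succ m ih =>
    simp only [wsum, Finset.mul_sum]
    exact Finset.sum_congr rfl fun p _ => ih _

lemma wsum_pow {α X : Type*} [Semiring X] (s : Finset α) (f : α → X) (m : ℕ) :
    (∑ p ∈ s, f p) ^ m = wsum s m (fun L => (L.map f).prod) := by
  induction m with
  | zero => simp [wsum]
  | succ m ih =>
    rw [pow_succ', ih, Finset.sum_mul]
    simp only [wsum]
    refine Finset.sum_congr rfl fun p _ => ?_
    rw [mul_wsum]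
    simp

/-- The numeric weight `G` from the second grouping. -/
def Gfun (a : ℤ → ℤ → ℝ) : List (ℤ × ℤ) → ℤ → ℝ
  | [], j => a j j
  | p :: L, j => a j p.1 ^ 2 * Gfun a L p.2

/-- The geometric-mean weight `K`. -/
noncomputable def Kfun (a : ℤ → ℤ → ℝ) : List (ℤ × ℤ) → ℤ → ℝ
  | [], j => Real.sqrt (a j j)
  | p :: L, j => a j p.1 * a p.1 p.2 * Kfun a L p.2

/-- The numeric weight from the first grouping. -/
def Pfun (a : ℤ → ℤ → ℝ) (L : List (ℤ × ℤ)) : ℝ := (L.map fun p => a p.1 p.2 ^ 2).prod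

@[simp] lemma Gfun_nil (a : ℤ → ℤ → ℝ) (j : ℤ) : Gfun a [] j = a j j := rfl

@[simp] lemma Gfun_cons (a : ℤ → ℤ → ℝ) (p : ℤ × ℤ) (L : List (ℤ × ℤ)) (j : ℤ) :
    Gfun a (p :: L) j = a j p.1 ^ 2 * Gfun a L p.2 := rfl

@[simp] lemma Kfun_nil (a : ℤ → ℤ → ℝ) (j : ℤ) : Kfun a [] j = Real.sqrt (a j j) := rfl

@[simp] lemma Kfun_cons (a : ℤ → ℤ → ℝ) (p : ℤ × ℤ) (L : List (ℤ × ℤ)) (j : ℤ) :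
    Kfun a (p :: L) j = a j p.1 * a p.1 p.2 * Kfun a L p.2 := rfl

@[simp] lemma Pfun_nil (a : ℤ → ℤ → ℝ) : Pfun a [] = 1 := rfl

@[simp] lemma Pfun_cons (a : ℤ → ℤ → ℝ) (p : ℤ × ℤ) (L : List (ℤ × ℤ)) :
    Pfun a (p :: L) = a p.1 p.2 ^ 2 * Pfun a L := by
  simp [Pfun]

lemma Gfun_nonneg {a : ℤ → ℤ → ℝ} (ha : ∀ i j, 0 ≤ a i j) :
    ∀ (L : List (ℤ × ℤ)) (j : ℤ), 0 ≤ Gfun a L j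
  | [], j => ha j j
  | p :: L, j => mul_nonneg (sq_nonneg _) (Gfun_nonneg ha L p.2)

lemma Kfun_nonneg {a : ℤ → ℤ → ℝ} (ha : ∀ i j, 0 ≤ a i j) :
    ∀ (L : List (ℤ × ℤ)) (j : ℤ), 0 ≤ Kfun a L j
  | [], _ => Real.sqrt_nonneg _
  | p :: L, j => mul_nonneg (mul_nonneg (ha _ _) (ha _ _)) (Kfun_nonneg ha L p.2)

lemma Pfun_nonneg {a : ℤ → ℤ → ℝ} (ha : ∀ i j, 0 ≤ a i j) :
    ∀ L : List (ℤ × ℤ), 0 ≤ Pfun a L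
  | [] => zero_le_one
  | p :: L => by
      rw [Pfun_cons]
      exact mul_nonneg (sq_nonneg _) (Pfun_nonneg ha L)

lemma Kfun_sq {a : ℤ → ℤ → ℝ} (ha : ∀ i j, 0 ≤ a i j) :
    ∀ (L : List (ℤ × ℤ)) (j : ℤ), Kfun a L j ^ 2 = Pfun a L * Gfun a L j
  | [], j => by simp [Real.sq_sqrt (ha j j)]
  | p :: L, j => by
      have ih := Kfun_sq ha L p.2
      simp only [Kfun_cons, Pfun_cons, Gfun_cons, mul_pow, ih]
      ring

end CotlarSteinAux

section CotlarSteinOps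

open CotlarSteinAux Finset

variable {H : Type*} [NormedAddCommGroup H] [InnerProductSpace ℝ H] [CompleteSpace H]
variable (T : ℤ → H →L[ℝ] H)

/-- The basic building block `Tᵢ* Tⱼ`. -/
noncomputable def Bop (p : ℤ × ℤ) : H →L[ℝ] H := star (T p.1) * T p.2

variable {T}
variable {a : ℤ → ℤ → ℝ}

lemma norm_T_le (ha : ∀ i j, 0 ≤ a i j)
    (hTT : ∀ i j, ‖(ContinuousLinearMap.adjoint (T i)).comp (T j)‖ ≤ a i j ^ 2)
    (i : ℤ) : ‖T i‖ ≤ a i i := by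
  have h1 : ‖star (T i) * T i‖ = ‖T i‖ * ‖T i‖ := by
    rw [star_eq_adjoint, ContinuousLinearMap.mul_def]
    exact norm_adjoint_comp_self (T i)
  have h2 : ‖star (T i) * T i‖ ≤ a i i ^ 2 := by
    rw [star_eq_adjoint, ContinuousLinearMap.mul_def]; exact hTT i i
  nlinarith [norm_nonneg (T i), ha i i]

lemma norm_B_le
    (hTT : ∀ i j, ‖(ContinuousLinearMap.adjoint (T i)).comp (T j)‖ ≤ a i j ^ 2)
    (p : ℤ × ℤ) : ‖Bop T p‖ ≤ a p.1 p.2 ^ 2 := by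
  rw [Bop, star_eq_adjoint, ContinuousLinearMap.mul_def]; exact hTT p.1 p.2

lemma bound1 (ha : ∀ i j, 0 ≤ a i j)
    (hTT : ∀ i j, ‖(ContinuousLinearMap.adjoint (T i)).comp (T j)‖ ≤ a i j ^ 2) :
    ∀ L : List (ℤ × ℤ), ‖(L.map (Bop T)).prod‖ ≤ Pfun a L
  | [] => by
      simp only [List.map_nil, List.prod_nil, Pfun_nil]
      rw [ContinuousLinearMap.one_def]
      exact ContinuousLinearMap.norm_id_le
  | p :: L => by
      rw [List.map_cons, List.prod_cons, Pfun_cons]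
      exact (norm_mul_le _ _).trans
        (mul_le_mul (norm_B_le hTT p) (bound1 ha hTT L) (norm_nonneg _) (sq_nonneg _))

lemma bound2_aux (ha : ∀ i j, 0 ≤ a i j)
    (hTT : ∀ i j, ‖(ContinuousLinearMap.adjoint (T i)).comp (T j)‖ ≤ a i j ^ 2)
    (hTT' : ∀ i j, ‖(T i).comp (ContinuousLinearMap.adjoint (T j))‖ ≤ a i j ^ 2) :
    ∀ (L : List (ℤ × ℤ)) (j : ℤ), ‖T j * (L.map (Bop T)).prod‖ ≤ Gfun a L j
  | [], j => by
      simpa using norm_T_le ha hTT j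
  | p :: L, j => by
      have hre : T j * ((p :: L).map (Bop T)).prod
          = (T j * star (T p.1)) * (T p.2 * (L.map (Bop T)).prod) := by
        rw [List.map_cons, List.prod_cons, Bop, mul_assoc, ← mul_assoc]
      rw [hre, Gfun_cons]
      refine (norm_mul_le _ _).trans (mul_le_mul ?_ (bound2_aux ha hTT hTT' L p.2)
        (norm_nonneg _) (sq_nonneg _))
      rw [star_eq_adjoint, ContinuousLinearMap.mul_def]; exact hTT' j p.1

lemma perword (ha : ∀ i j, 0 ≤ a i j)
    (hTT : ∀ i j, ‖(ContinuousLinearMap.adjoint (T i)).comp (T j)‖ ≤ a i j ^ 2)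
    (hTT' : ∀ i j, ‖(T i).comp (ContinuousLinearMap.adjoint (T j))‖ ≤ a i j ^ 2)
    (p : ℤ × ℤ) (L : List (ℤ × ℤ)) :
    ‖Bop T p * (L.map (Bop T)).prod‖
      ≤ (Real.sqrt (a p.1 p.1) * a p.1 p.2) * Kfun a L p.2 := by
  set M := Bop T p * (L.map (Bop T)).prod with hM
  have hb1 : ‖M‖ ≤ a p.1 p.2 ^ 2 * Pfun a L := by
    have := bound1 ha hTT (p :: L)
    rwa [List.map_cons, List.prod_cons, Pfun_cons] at this
  have hb2 : ‖M‖ ≤ a p.1 p.1 * Gfun a L p.2 := by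
    have hre : M = star (T p.1) * (T p.2 * (L.map (Bop T)).prod) := by
      rw [hM, Bop, mul_assoc]
    rw [hre]
    refine (norm_mul_le _ _).trans (mul_le_mul ?_ (bound2_aux ha hTT hTT' L p.2)
      (norm_nonneg _) (ha _ _))
    calc ‖star (T p.1)‖ = ‖T p.1‖ := by
          rw [star_eq_adjoint]; exact ContinuousLinearMap.adjoint.norm_map (T p.1)
      _ ≤ a p.1 p.1 := norm_T_le ha hTT p.1
  have hrhs : 0 ≤ (Real.sqrt (a p.1 p.1) * a p.1 p.2) * Kfun a L p.2 :=
    mul_nonneg (mul_nonneg (Real.sqrt_nonneg _) (ha _ _)) (Kfun_nonneg ha _ _)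
  have hsq : ‖M‖ ^ 2 ≤ ((Real.sqrt (a p.1 p.1) * a p.1 p.2) * Kfun a L p.2) ^ 2 := by
    have hK := Kfun_sq ha L p.2
    have he : ((Real.sqrt (a p.1 p.1) * a p.1 p.2) * Kfun a L p.2) ^ 2
        = (a p.1 p.2 ^ 2 * Pfun a L) * (a p.1 p.1 * Gfun a L p.2) := by
      rw [mul_pow, mul_pow, Real.sq_sqrt (ha _ _), hK]; ring
    rw [he, sq]
    exact mul_le_mul hb1 hb2 (norm_nonneg _)
      (mul_nonneg (sq_nonneg _) (Pfun_nonneg ha L))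
  have := Real.sqrt_le_sqrt hsq
  rwa [Real.sqrt_sq (norm_nonneg _), Real.sqrt_sq hrhs] at this

end CotlarSteinOps

section CotlarSteinSum

open CotlarSteinAux Finset

variable {a : ℤ → ℤ → ℝ} {A : ℝ} {F : Finset ℤ}

lemma Ksum_le (ha : ∀ i j, 0 ≤ a i j) (hA0 : 0 ≤ A)
    (hdiag : ∀ j, a j j ≤ A) (hrow : ∀ j, ∑ i ∈ F, a j i ≤ A) :
    ∀ (m : ℕ) (j : ℤ),
    wsum (F ×ˢ F) m (fun L => Kfun a L j) ≤ A ^ (2 * m) * Real.sqrt A := by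
  intro m
  induction m with
  | zero =>
      intro j
      have : Real.sqrt (a j j) ≤ Real.sqrt A := Real.sqrt_le_sqrt (hdiag j)
      simpa [wsum] using this
  | succ m ih =>
      intro j
      have hC : 0 ≤ A ^ (2 * m) * Real.sqrt A :=
        mul_nonneg (pow_nonneg hA0 _) (Real.sqrt_nonneg _)
      calc wsum (F ×ˢ F) (m + 1) (fun L => Kfun a L j)
          = ∑ p ∈ F ×ˢ F, (a j p.1 * a p.1 p.2) * wsum (F ×ˢ F) m (fun L => Kfun a L p.2) := by
            simp only [wsum]
            exact Finset.sum_congr rfl fun p _ => by rw [mul_wsum]; simp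
        _ ≤ ∑ p ∈ F ×ˢ F, (a j p.1 * a p.1 p.2) * (A ^ (2 * m) * Real.sqrt A) :=
            Finset.sum_le_sum fun p _ =>
              mul_le_mul_of_nonneg_left (ih p.2) (mul_nonneg (ha _ _) (ha _ _))
        _ = ∑ i ∈ F, a j i * (∑ j' ∈ F, a i j' * (A ^ (2 * m) * Real.sqrt A)) := by
            rw [Finset.sum_product]
            exact Finset.sum_congr rfl fun i _ => by
              rw [Finset.mul_sum]
              exact Finset.sum_congr rfl fun j' _ => by ring
        _ ≤ ∑ i ∈ F, a j i * (A * (A ^ (2 * m) * Real.sqrt A)) := by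
            refine Finset.sum_le_sum fun i _ => mul_le_mul_of_nonneg_left ?_ (ha j i)
            rw [← Finset.sum_mul]
            exact mul_le_mul_of_nonneg_right (hrow i) hC
        _ ≤ A * (A * (A ^ (2 * m) * Real.sqrt A)) := by
            rw [← Finset.sum_mul]
            exact mul_le_mul_of_nonneg_right (hrow j) (mul_nonneg hA0 hC)
        _ = A ^ (2 * (m + 1)) * Real.sqrt A := by ring

end CotlarSteinSum

open CotlarSteinAux Finset

theorem cotlar_stein_finite
    {H : Type*} [NormedAddCommGroup H] [InnerProductSpace ℝ H] [CompleteSpace H]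
    (T : ℤ → H →L[ℝ] H)
    (hfin : (Function.support T).Finite)
    (a : ℤ → ℤ → ℝ)
    (ha_nonneg : ∀ i j, 0 ≤ a i j)
    (ha_symm : ∀ i j, a i j = a j i)
    (hTT : ∀ i j, ‖(ContinuousLinearMap.adjoint (T i)).comp (T j)‖ ≤ a i j ^ 2)
    (hTT' : ∀ i j, ‖(T i).comp (ContinuousLinearMap.adjoint (T j))‖ ≤ a i j ^ 2)
    (A : ℝ)
    (ha_sum : ∀ i, Summable (a i))
    (hA : ∀ i, (∑' j, a i j) ≤ A) :
    ‖∑ᶠ i, T i‖ ≤ A := by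
  classical
  have hA0 : 0 ≤ A := le_trans (tsum_nonneg (ha_nonneg 0)) (hA 0)
  have hdiag : ∀ j, a j j ≤ A := fun j =>
    le_trans (Summable.le_tsum (ha_sum j) j fun k _ => ha_nonneg j k) (hA j)
  set F : Finset ℤ := hfin.toFinset with hFdef
  have hrow : ∀ j, ∑ i ∈ F, a j i ≤ A := fun j =>
    le_trans (Summable.sum_le_tsum F (fun k _ => ha_nonneg j k) (ha_sum j)) (hA j)
  rw [finsum_eq_sum T hfin]
  rcases eq_or_lt_of_le hA0 with hAz | hApos
  · -- A = 0 : all operators vanish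
    have hT0 : ∀ i, T i = 0 := fun i => by
      have h1 : ‖T i‖ ≤ a i i := norm_T_le ha_nonneg hTT i
      have h2 : a i i ≤ 0 := hAz ▸ hdiag i
      exact norm_le_zero_iff.mp (h1.trans h2)
    have : (∑ i ∈ F, T i) = 0 := Finset.sum_eq_zero fun i _ => hT0 i
    rw [show hfin.toFinset = F from rfl, this, norm_zero]
    exact hA0
  -- main case A > 0
  set S : H →L[ℝ] H := ∑ i ∈ F, T i with hSdef
  set N : ℝ := (F.card : ℝ) with hNdef
  -- star S * S as a sum over pairs
  have hR : star S * S = ∑ p ∈ F ×ˢ F, Bop T p := by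
    rw [hSdef, star_sum, Finset.sum_mul_sum, ← Finset.sum_product']
    exact Finset.sum_congr rfl fun p _ => rfl
  -- key estimate
  have key : ∀ m : ℕ, ‖(star S * S) ^ (m + 1)‖ ≤ N * A ^ (2 * (m + 1)) := by
    intro m
    rw [hR, wsum_pow]
    refine (norm_wsum_le _ _ _).trans ?_
    calc wsum (F ×ˢ F) (m + 1) (fun L => ‖(L.map (Bop T)).prod‖)
        = ∑ p ∈ F ×ˢ F, wsum (F ×ˢ F) m
            (fun L => ‖Bop T p * (L.map (Bop T)).prod‖) := by
          simp only [wsum, List.map_cons, List.prod_cons]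
      _ ≤ ∑ p ∈ F ×ˢ F, wsum (F ×ˢ F) m
            (fun L => (Real.sqrt (a p.1 p.1) * a p.1 p.2) * Kfun a L p.2) :=
          Finset.sum_le_sum fun p _ => wsum_le_wsum _ _
            (fun L => perword ha_nonneg hTT hTT' p L)
      _ = ∑ p ∈ F ×ˢ F, (Real.sqrt (a p.1 p.1) * a p.1 p.2) *
            wsum (F ×ˢ F) m (fun L => Kfun a L p.2) :=
          Finset.sum_congr rfl fun p _ => (mul_wsum _ _ _ _).symm
      _ ≤ ∑ p ∈ F ×ˢ F, (Real.sqrt (a p.1 p.1) * a p.1 p.2) *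
            (A ^ (2 * m) * Real.sqrt A) :=
          Finset.sum_le_sum fun p _ => mul_le_mul_of_nonneg_left
            (Ksum_le ha_nonneg hA0 hdiag hrow m p.2)
            (mul_nonneg (Real.sqrt_nonneg _) (ha_nonneg _ _))
      _ = ∑ i ∈ F, Real.sqrt (a i i) * (∑ j ∈ F, a i j * (A ^ (2 * m) * Real.sqrt A)) := by
          rw [Finset.sum_product]
          exact Finset.sum_congr rfl fun i _ => by
            rw [Finset.mul_sum]
            exact Finset.sum_congr rfl fun j _ => by ring
      _ ≤ ∑ i ∈ F, Real.sqrt A * (A * (A ^ (2 * m) * Real.sqrt A)) := by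
          refine Finset.sum_le_sum fun i _ => ?_
          have h1 : Real.sqrt (a i i) ≤ Real.sqrt A := Real.sqrt_le_sqrt (hdiag i)
          have h2 : ∑ j ∈ F, a i j * (A ^ (2 * m) * Real.sqrt A)
              ≤ A * (A ^ (2 * m) * Real.sqrt A) := by
            rw [← Finset.sum_mul]
            exact mul_le_mul_of_nonneg_right (hrow i)
              (mul_nonneg (pow_nonneg hA0 _) (Real.sqrt_nonneg _))
          refine mul_le_mul h1 h2 ?_ (Real.sqrt_nonneg _)
          exact Finset.sum_nonneg fun j _ => mul_nonneg (ha_nonneg i j)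
            (mul_nonneg (pow_nonneg hA0 _) (Real.sqrt_nonneg _))
      _ = N * A ^ (2 * (m + 1)) := by
          rw [Finset.sum_const, nsmul_eq_mul, ← hNdef]
          congr 1
          have : Real.sqrt A * (A * (A ^ (2 * m) * Real.sqrt A))
              = (Real.sqrt A * Real.sqrt A) * (A * A ^ (2 * m)) := by ring
          rw [this, Real.mul_self_sqrt hA0]
          ring
  -- power trick
  have hsa : IsSelfAdjoint (star S * S) := IsSelfAdjoint.star_mul_self S
  have hpow : ∀ k : ℕ, ‖S‖ ^ (2 ^ (k + 1)) ≤ N * A ^ (2 ^ (k + 1)) := by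
    intro k
    have e1 : ‖S‖ ^ (2 ^ (k + 1)) = ‖star S * S‖ ^ (2 ^ k) := by
      have h2 : (2 : ℕ) ^ (k + 1) = 2 * 2 ^ k := by rw [pow_succ']
      rw [h2, pow_mul, star_eq_adjoint, ContinuousLinearMap.mul_def,
        norm_adjoint_comp_self, ← sq]
    have e2 : ‖star S * S‖ ^ (2 ^ k) = ‖(star S * S) ^ (2 ^ k)‖ := by
      have h := IsSelfAdjoint.nnnorm_pow_two_pow (E := H →L[ℝ] H) hsa k
      have h' := congrArg (fun t : NNReal => (t : ℝ)) h
      push_cast at h'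
      exact h'.symm
    have h2k : 2 ^ k = (2 ^ k - 1) + 1 :=
      (Nat.succ_pred_eq_of_pos (pow_pos (by norm_num : (0:ℕ) < 2) k)).symm
    have h2k2 : 2 * ((2 ^ k - 1) + 1) = 2 ^ (k + 1) := by
      rw [← h2k, pow_succ']
    rw [e1, e2, h2k]
    calc ‖(star S * S) ^ ((2 ^ k - 1) + 1)‖ ≤ N * A ^ (2 * ((2 ^ k - 1) + 1)) :=
          key (2 ^ k - 1)
      _ = N * A ^ (2 ^ (k + 1)) := by rw [h2k2]
  -- conclude by taking roots
  by_contra hc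
  push_neg at hc
  set r : ℝ := ‖S‖ / A with hrdef
  have hr1 : 1 < r := (one_lt_div hApos).mpr hc
  obtain ⟨n, hn⟩ := ((tendsto_pow_atTop_atTop_of_one_lt hr1).eventually_gt_atTop N).exists
  have hle : r ^ n ≤ r ^ (2 ^ (n + 1)) := by
    refine pow_le_pow_right₀ hr1.le ?_
    calc n ≤ 2 ^ n := (Nat.lt_two_pow_self).le
      _ ≤ 2 ^ (n + 1) := Nat.pow_le_pow_right (by norm_num) (Nat.le_succ n)
  have hub : r ^ (2 ^ (n + 1)) ≤ N := by
    rw [hrdef, div_pow, div_le_iff₀ (pow_pos hApos _)]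
    exact hpow n
  exact absurd ((hn.trans_le hle).trans_le hub) (lt_irrefl N)
end

section
/- Let L be a positive-definite linear functional on ℝ[X] and (P̃_k)_{k≥0} the orthonormal polynomial sequence (with positive leading coefficients). Then there exist real sequences (α_k) and positive reals (β_k) such that √β_{n+1}·P̃_{n+1}(x) = (x − α_n)·P̃_n(x) − √β_n·P̃_{n−1}(x) for all n ≥ 0, with P̃_{−1} ≡ 0 and P̃_0 ≡ 1/√β_0 where β_0 = L[1]. -/
/-!
For the inner product `(p, q) ↦ L (p * q)`, the polynomials `P 0, …, P (n + 1)` are an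
orthonormal basis of the polynomials of degree `≤ n + 1`, so `X * P n` is the sum of its Fourier
terms `L (P k * (X * P n)) • P k`. As `L (P k * (X * P n)) = L (P n * (X * P k))` and `X * P k`
has degree `k + 1`, only `k = n - 1, n, n + 1` survive. Comparing coefficients of `X ^ (n + 1)`
shows that the top coefficient is `lc (P n) / lc (P (n + 1)) > 0`, which is `√β (n + 1)`.
-/

open Polynomial Finset Submodule

namespace OrthonormalFamily

variable {K A : Type*} [CommSemiring K] [Semiring A] [Algebra K A] (L : A →ₗ[K] K)
  {P : ℕ → A}

theorem apply_mul_sum_smul (horth : ∀ i j, L (P i * P j) = if i = j then 1 else 0)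
    (s : Finset ℕ) (f : ℕ → K) (j : ℕ) :
    L (P j * ∑ i ∈ s, f i • P i) = if j ∈ s then f j else 0 := by
  simp [Finset.mul_sum, horth]

theorem eq_sum_of_mem_span (horth : ∀ i j, L (P i * P j) = if i = j then 1 else 0)
    {s : Finset ℕ} {q : A} (hq : q ∈ span K (P '' s)) :
    q = ∑ k ∈ s, L (P k * q) • P k := by
  obtain ⟨f, rfl⟩ := (mem_span_image_finset_iff_exists_fun' K).mp hq
  refine Finset.sum_congr rfl fun k hk => ?_
  rw [apply_mul_sum_smul L horth, if_pos hk]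

theorem apply_mul_eq_zero_of_mem_span (horth : ∀ i j, L (P i * P j) = if i = j then 1 else 0)
    {s : Finset ℕ} {q : A} (hq : q ∈ span K (P '' s)) {j : ℕ} (hj : j ∉ s) :
    L (P j * q) = 0 := by
  obtain ⟨f, rfl⟩ := (mem_span_image_finset_iff_exists_fun' K).mp hq
  rw [apply_mul_sum_smul L horth, if_neg hj]

end OrthonormalFamily

namespace Polynomial.Sequence

theorem coeff_self_eq_leadingCoeff {R : Type*} [Semiring R] (S : Sequence R) (n : ℕ) :
    (S n).coeff n = (S n).leadingCoeff := by
  rw [leadingCoeff, S.natDegree_eq]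

theorem mem_span_range_of_degree_lt {K : Type*} [Field K] (S : Sequence K) {q : K[X]} {m : ℕ}
    (hq : q.degree < m) : q ∈ span K (S '' (range m : Finset ℕ)) := by
  rw [coe_range, S.span_degreeLT fun i _ => (leadingCoeff_ne_zero.mpr (S.ne_zero i)).isUnit]
  exact mem_degreeLT.mpr hq

end Polynomial.Sequence

namespace OrthonormalPolynomials

open OrthonormalFamily Polynomial.Sequence

variable {K : Type*} [Field K] (L : K[X] →ₗ[K] K) {S : Polynomial.Sequence K}

theorem apply_mul_eq_zero_of_degree_lt (horth : ∀ i j, L (S i * S j) = if i = j then 1 else 0)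
    {q : K[X]} {n : ℕ} (hq : q.degree < n) : L (S n * q) = 0 :=
  apply_mul_eq_zero_of_mem_span L horth (S.mem_span_range_of_degree_lt hq) (by simp)

theorem eq_sum_of_natDegree_le (horth : ∀ i j, L (S i * S j) = if i = j then 1 else 0)
    {q : K[X]} {n : ℕ} (hq : q.natDegree ≤ n) :
    q = ∑ k ∈ range (n + 1), L (S k * q) • S k :=
  eq_sum_of_mem_span L horth (S.mem_span_range_of_degree_lt
    ((degree_le_of_natDegree_le hq).trans_lt (WithBot.coe_lt_coe.mpr n.lt_succ_self)))

theorem apply_mul_eq_coeff_div_leadingCoeff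
    (horth : ∀ i j, L (S i * S j) = if i = j then 1 else 0)
    {q : K[X]} {n : ℕ} (hq : q.natDegree ≤ n) :
    L (S n * q) = q.coeff n / (S n).leadingCoeff := by
  have hcoeff : q.coeff n = L (S n * q) * (S n).leadingCoeff := by
    conv_lhs => rw [eq_sum_of_natDegree_le L horth hq]
    rw [finsetSum_coeff, Finset.sum_eq_single n]
    · rw [coeff_smul, coeff_self_eq_leadingCoeff, smul_eq_mul]
    · intro k hk hkn
      rw [mem_range] at hk
      rw [coeff_smul, coeff_eq_zero_of_natDegree_lt (by rw [S.natDegree_eq]; omega), smul_zero]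
    · simp
  rw [hcoeff, mul_div_cancel_right₀ _ (leadingCoeff_ne_zero.mpr (S.ne_zero n))]

theorem apply_succ_mul_X_mul (horth : ∀ i j, L (S i * S j) = if i = j then 1 else 0) (n : ℕ) :
    L (S (n + 1) * (X * S n)) = (S n).leadingCoeff / (S (n + 1)).leadingCoeff := by
  rw [apply_mul_eq_coeff_div_leadingCoeff L horth, coeff_X_mul, coeff_self_eq_leadingCoeff]
  rw [natDegree_X_mul (S.ne_zero n), S.natDegree_eq]

theorem apply_one_eq_inv_leadingCoeff_sq
    (horth : ∀ i j, L (S i * S j) = if i = j then 1 else 0) :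
    L 1 = ((S 0).leadingCoeff ^ 2)⁻¹ := by
  have h := horth 0 0
  rw [if_pos rfl, eq_C_of_natDegree_eq_zero (S.natDegree_eq 0), coeff_self_eq_leadingCoeff,
    ← C_mul, ← mul_one (C _), ← smul_eq_C_mul, map_smul, smul_eq_mul] at h
  rw [sq, eq_inv_of_mul_eq_one_right h]

theorem X_mul_eq_three_term (horth : ∀ i j, L (S i * S j) = if i = j then 1 else 0) (n : ℕ) :
    X * S n = L (S (n + 1) * (X * S n)) • S (n + 1) + L (S n * (X * S n)) • S n
      + if n = 0 then 0 else L (S n * (X * S (n - 1))) • S (n - 1) := by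
  have hexp := eq_sum_of_natDegree_le L horth (q := X * S n) (n := n + 1)
    (by rw [natDegree_X_mul (S.ne_zero n), S.natDegree_eq])
  rw [sum_range_succ, sum_range_succ] at hexp
  rcases n with _ | m
  · simpa [add_comm] using hexp
  · have hlow : ∑ k ∈ range m, L (S k * (X * S (m + 1))) • S k = 0 := by
      refine sum_eq_zero fun k hk => ?_
      rw [show S k * (X * S (m + 1)) = S (m + 1) * (X * S k) by ring,
        apply_mul_eq_zero_of_degree_lt L horth, zero_smul]
      rw [X_mul, degree_mul_X, S.degree_eq]
      exact_mod_cast (by simpa using hk : k + 1 < m + 1)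
    rw [sum_range_succ, hlow, zero_add,
      show S m * (X * S (m + 1)) = S (m + 1) * (X * S m) by ring] at hexp
    rw [if_neg m.succ_ne_zero, Nat.add_sub_cancel]
    exact hexp.trans (by abel)

end OrthonormalPolynomials

open OrthonormalPolynomials

theorem orthonormal_three_term_recurrence_general
    (L : Polynomial ℝ →ₗ[ℝ] ℝ)
    (P : ℕ → Polynomial ℝ)
    (hdeg : ∀ k, (P k).natDegree = k)
    (horth : ∀ i j, L (P i * P j) = if i = j then 1 else 0)
    (hlead : ∀ k, 0 < (P k).leadingCoeff) :
    ∃ α : ℕ → ℝ, ∃ β : ℕ → ℝ,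
      (∀ k, 0 < β k) ∧
      β 0 = L 1 ∧
      P 0 = Polynomial.C (1 / Real.sqrt (β 0)) ∧
      ∀ n : ℕ,
        Polynomial.C (Real.sqrt (β (n + 1))) * P (n + 1)
          = (X - Polynomial.C (α n)) * P n
            - Polynomial.C (Real.sqrt (β n)) * (if n = 0 then 0 else P (n - 1)) := by
  let S : Polynomial.Sequence ℝ :=
    ⟨P, fun k =>
      (degree_eq_iff_natDegree_eq (leadingCoeff_ne_zero.mp (hlead k).ne')).mpr (hdeg k)⟩
  let b n := (P n).leadingCoeff / (P (n + 1)).leadingCoeff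
  have hb n : 0 < b n := div_pos (hlead n) (hlead (n + 1))
  have hb_eq n : L (P (n + 1) * (X * P n)) = b n := apply_succ_mul_X_mul (S := S) L horth n
  have hsqrt n : √(b n ^ 2) = b n := Real.sqrt_sq (hb n).le
  have hL1 : L 1 = ((P 0).leadingCoeff ^ 2)⁻¹ :=
    apply_one_eq_inv_leadingCoeff_sq (S := S) L horth
  refine ⟨fun n => L (P n * (X * P n)), fun k => if k = 0 then L 1 else b (k - 1) ^ 2,
    fun k => ?_, if_pos rfl, ?_, fun n => ?_⟩
  · rcases k with _ | k
    · show 0 < L 1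
      rw [hL1]
      exact inv_pos.mpr (pow_pos (hlead 0) 2)
    · exact pow_pos (hb k) 2
  · show P 0 = C (1 / √(L 1))
    rw [hL1, Real.sqrt_inv, Real.sqrt_sq (hlead 0).le, one_div, inv_inv,
      ← S.coeff_self_eq_leadingCoeff 0]
    exact eq_C_of_natDegree_eq_zero (hdeg 0)
  · have h := X_mul_eq_three_term (S := S) L horth n
    simp only [show ⇑S = P from rfl, smul_eq_C_mul] at h
    rcases n with _ | m
    · simp only [hb_eq, add_zero, if_true, Nat.add_one_ne_zero, if_false, Nat.add_sub_cancel,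
        hsqrt] at h ⊢
      linear_combination -h
    · simp only [hb_eq, Nat.add_one_ne_zero, if_false, Nat.add_sub_cancel, hsqrt] at h ⊢
      linear_combination -h

theorem orthonormal_three_term_recurrence
    (L : Polynomial ℝ →ₗ[ℝ] ℝ)
    (hpos : ∀ p : Polynomial ℝ, p ≠ 0 → 0 < L (p ^ 2))
    (P : ℕ → Polynomial ℝ)
    (hdeg : ∀ k, (P k).natDegree = k)
    (horth : ∀ i j, L (P i * P j) = if i = j then 1 else 0)
    (hlead : ∀ k, 0 < (P k).leadingCoeff) :
    ∃ α : ℕ → ℝ, ∃ β : ℕ → ℝ,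
      (∀ k, 0 < β k) ∧
      β 0 = L 1 ∧
      P 0 = Polynomial.C (1 / Real.sqrt (β 0)) ∧
      ∀ n : ℕ,
        Polynomial.C (Real.sqrt (β (n + 1))) * P (n + 1)
          = (X - Polynomial.C (α n)) * P n
            - Polynomial.C (Real.sqrt (β n)) * (if n = 0 then 0 else P (n - 1)) :=
  orthonormal_three_term_recurrence_general L P hdeg horth hlead
end
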